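/- arXiv:2111.01162 — 2 statements merged into one kernel-verified Lean document; each statement's English description precedes it below -/
import Mathlib

section
/- Let g be a Z-graded Lie algebra concentrated in degrees 0, 1, 2 with bracket {d_α, d_β} = Γ^μ_{αβ} e_μ on the degree-1 part, let R = ℂ[λ^1,...,λ^n], I the ideal generated by the quadrics λ^α Γ^μ_{αβ} λ^β, and Γ an R/I-module. Then the operator D = λ^α (∂/∂θ^α − Γ^μ_{αβ} θ^β ∂/∂x^μ) acting on Γ ⊗ C^∞(ℝ^d) ⊗ Λ•(θ^1,...,θ^n) squares to zero. -/
open Finset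

/-- Let `g` be a graded Lie algebra concentrated in degrees `0,1,2`
with bracket `{d_α, d_β} = Γ^μ_{αβ} e_μ`, let `R = ℂ[λ¹,…,λⁿ]`, `I` the ideal
generated by the quadrics `λ^α Γ^μ_{αβ} λ^β`, and `Γ` an `R/I`-module.  Then the
operator `D = λ^α (∂/∂θ^α − Γ^μ_{αβ} θ^β ∂/∂x^μ)` acting on
`Γ ⊗ C^∞(ℝ^d) ⊗ Λ•(θ¹,…,θⁿ)` squares to zero.

Here the total space `E = Γ ⊗ C^∞(ℝ^d) ⊗ Λ•(θ)` is presented as a `ℂ`-vector space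
equipped with the mutually compatible operators acting on the three tensor factors:
`L α` (multiplication by `λ^α` through the `R/I`-module structure of `Γ`),
`derθ α = ∂/∂θ^α`, `mulθ α = θ^α ·` (odd operators on the exterior factor, obeying
the canonical anticommutation relations), and `derx μ = ∂/∂x^μ` (even, mutually
commuting, and commuting with everything else).  The hypothesis `hI` says exactly
that the quadrics `λ^α Γ^μ_{αβ} λ^β` generating `I` act by zero, i.e. that `Γ` is a
module over `R/I`.  The conclusion is `D² = 0`. -/
theorem pure_spinor_differential_squares_to_zero
    {V : Type*} [AddCommGroup V] [Module ℂ V] (n d : ℕ)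
    (L derθ mulθ : Fin n → Module.End ℂ V) (derx : Fin d → Module.End ℂ V)
    (Γm : Fin d → Fin n → Fin n → ℂ)
    (hΓsymm : ∀ μ α β, Γm μ α β = Γm μ β α)
    -- the λ-action on Γ: commuting multiplication operators, commuting with the other factors
    (hLL : ∀ α β, L α * L β = L β * L α)
    (hLderθ : ∀ α β, L α * derθ β = derθ β * L α)
    (hLmulθ : ∀ α β, L α * mulθ β = mulθ β * L α)
    (hLderx : ∀ α μ, L α * derx μ = derx μ * L α)
    -- the vector-field operators ∂/∂x^μ commute with everything on the odd factor
    (hxx : ∀ μ ν, derx μ * derx ν = derx ν * derx μ)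
    (hxderθ : ∀ μ α, derx μ * derθ α = derθ α * derx μ)
    (hxmulθ : ∀ μ α, derx μ * mulθ α = mulθ α * derx μ)
    -- canonical anticommutation relations for the odd variables θ and ∂/∂θ
    (hθθ : ∀ α β, derθ α * derθ β + derθ β * derθ α = 0)
    (hmm : ∀ α β, mulθ α * mulθ β + mulθ β * mulθ α = 0)
    (hθm : ∀ α β, derθ α * mulθ β + mulθ β * derθ α = if α = β then 1 else 0)
    -- Γ is a module over R/I: the generators λ^α Γ^μ_{αβ} λ^β of I act by zero
    (hI : ∀ μ, ∑ α, ∑ β, Γm μ α β • (L α * L β) = 0) :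
    (∑ α, L α * (derθ α - ∑ β, ∑ μ, Γm μ α β • (mulθ β * derx μ))) ^ 2 = 0 := by
  classical
  set N : Fin n → Fin d → Module.End ℂ V := fun γ μ => mulθ γ * derx μ with hN
  set M : Fin n → Module.End ℂ V := fun α => ∑ β, ∑ μ, Γm μ α β • N β μ with hM
  set A : Fin n → Module.End ℂ V := fun α => derθ α - M α with hA
  have hMe : ∀ α, M α = ∑ γ, ∑ μ, Γm μ α γ • N γ μ := fun α => rfl
  -- N operators pairwise anticommute
  have hNN : ∀ γ μ δ ν, N γ μ * N δ ν = -(N δ ν * N γ μ) := by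
    intro γ μ δ ν
    have h1 : mulθ γ * mulθ δ = -(mulθ δ * mulθ γ) := by
      have := hmm γ δ; linear_combination (norm := noncomm_ring) this
    calc mulθ γ * derx μ * (mulθ δ * derx ν)
        = mulθ γ * (derx μ * mulθ δ) * derx ν := by noncomm_ring
      _ = mulθ γ * (mulθ δ * derx μ) * derx ν := by rw [hxmulθ]
      _ = (mulθ γ * mulθ δ) * (derx μ * derx ν) := by noncomm_ring
      _ = (-(mulθ δ * mulθ γ)) * (derx ν * derx μ) := by rw [h1, hxx]
      _ = -(mulθ δ * (mulθ γ * derx ν) * derx μ) := by noncomm_ring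
      _ = -(mulθ δ * (derx ν * mulθ γ) * derx μ) := by rw [hxmulθ]
      _ = -(mulθ δ * derx ν * (mulθ γ * derx μ)) := by noncomm_ring
  have hNM : ∀ γ μ β, N γ μ * M β = -(M β * N γ μ) := by
    intro γ μ β
    rw [hM]
    simp only [Finset.mul_sum, Finset.sum_mul, mul_smul_comm, smul_mul_assoc]
    rw [← Finset.sum_neg_distrib]
    refine Finset.sum_congr rfl fun δ _ => ?_
    rw [← Finset.sum_neg_distrib]
    refine Finset.sum_congr rfl fun ν _ => ?_
    rw [hNN γ μ δ ν, smul_neg]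
  have hMM : ∀ α β, M α * M β = -(M β * M α) := by
    intro α β
    calc M α * M β = ∑ γ, ∑ μ, Γm μ α γ • (N γ μ * M β) := by
          rw [hMe α, Finset.sum_mul]
          exact Finset.sum_congr rfl fun γ _ => by
            rw [Finset.sum_mul]
            exact Finset.sum_congr rfl fun μ _ => smul_mul_assoc _ _ _
      _ = ∑ γ, ∑ μ, -(Γm μ α γ • (M β * N γ μ)) := by
          refine Finset.sum_congr rfl fun γ _ => Finset.sum_congr rfl fun μ _ => ?_
          rw [hNM γ μ β, smul_neg]
      _ = -(M β * M α) := by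
          rw [hMe α, Finset.mul_sum, ← Finset.sum_neg_distrib]
          refine Finset.sum_congr rfl fun γ _ => ?_
          rw [Finset.mul_sum, ← Finset.sum_neg_distrib]
          refine Finset.sum_congr rfl fun μ _ => ?_
          rw [mul_smul_comm]
  -- derθ/M anticommutator
  have hdM : ∀ α β, derθ α * M β + M β * derθ α = ∑ μ, Γm μ β α • derx μ := by
    intro α β
    rw [hMe β]
    simp only [Finset.mul_sum, Finset.sum_mul, mul_smul_comm, smul_mul_assoc]
    rw [← Finset.sum_add_distrib]
    have key : ∀ γ, (∑ μ, Γm μ β γ • (derθ α * N γ μ)) + ∑ μ, Γm μ β γ • (N γ μ * derθ α)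
        = ∑ μ, if α = γ then Γm μ β γ • derx μ else 0 := by
      intro γ
      rw [← Finset.sum_add_distrib]
      refine Finset.sum_congr rfl fun μ _ => ?_
      rw [← smul_add]
      have : derθ α * N γ μ + N γ μ * derθ α = (if α = γ then 1 else 0) * derx μ := by
        calc derθ α * (mulθ γ * derx μ) + mulθ γ * derx μ * derθ α
            = derθ α * mulθ γ * derx μ + mulθ γ * (derx μ * derθ α) := by noncomm_ring
          _ = derθ α * mulθ γ * derx μ + mulθ γ * (derθ α * derx μ) := by rw [hxderθ]
          _ = (derθ α * mulθ γ + mulθ γ * derθ α) * derx μ := by noncomm_ring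
          _ = (if α = γ then 1 else 0) * derx μ := by rw [hθm]
      rw [this]
      split_ifs with h
      · rw [one_mul]
      · rw [zero_mul, smul_zero]
    rw [Finset.sum_congr rfl fun γ _ => key γ, Finset.sum_comm]
    refine Finset.sum_congr rfl fun μ _ => ?_
    simp
  -- anticommutator of the A's
  have hAA : ∀ α β, A α * A β + A β * A α = ∑ μ, ((-2 : ℂ) * Γm μ α β) • derx μ := by
    intro α β
    have expand : A α * A β + A β * A α
        = (derθ α * derθ β + derθ β * derθ α)
          - (derθ α * M β + M β * derθ α) - (derθ β * M α + M α * derθ β)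
          + (M α * M β + M β * M α) := by
      rw [hA]; noncomm_ring
    rw [expand, hθθ, hdM, hdM, hMM α β, neg_add_cancel, add_zero, zero_sub]
    have e1 : (∑ μ, Γm μ β α • derx μ) = ∑ μ, Γm μ α β • derx μ :=
      Finset.sum_congr rfl fun μ _ => by rw [hΓsymm μ β α]
    rw [e1, ← Finset.sum_neg_distrib, ← Finset.sum_sub_distrib]
    refine Finset.sum_congr rfl fun μ _ => ?_
    module
  -- A commutes with L
  have hAL : ∀ α β, A α * L β = L β * A α := by
    intro α β
    rw [hA, sub_mul, mul_sub, hM]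
    congr 1
    · exact (hLderθ β α).symm
    · simp only [Finset.sum_mul, Finset.mul_sum, smul_mul_assoc, mul_smul_comm]
      refine Finset.sum_congr rfl fun γ _ => Finset.sum_congr rfl fun μ _ => ?_
      congr 1
      calc mulθ γ * derx μ * L β = mulθ γ * (L β * derx μ) := by
            rw [mul_assoc, ← hLderx]
        _ = (L β * mulθ γ) * derx μ := by rw [← mul_assoc, ← hLmulθ]
        _ = L β * (mulθ γ * derx μ) := by rw [mul_assoc]
  set D : Module.End ℂ V := ∑ α, L α * A α with hD
  have hDsq : D * D = ∑ α, ∑ β, (L α * L β) * (A α * A β) := by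
    rw [hD, Finset.sum_mul]
    refine Finset.sum_congr rfl fun α _ => ?_
    rw [Finset.mul_sum]
    refine Finset.sum_congr rfl fun β _ => ?_
    calc L α * A α * (L β * A β) = L α * (A α * L β) * A β := by noncomm_ring
      _ = L α * (L β * A α) * A β := by rw [hAL]
      _ = (L α * L β) * (A α * A β) := by noncomm_ring
  have h2 : D * D + D * D = ∑ α, ∑ β, (L α * L β) * (A α * A β + A β * A α) := by
    rw [hDsq]
    nth_rewrite 2 [Finset.sum_comm]
    rw [← Finset.sum_add_distrib]
    refine Finset.sum_congr rfl fun α _ => ?_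
    rw [← Finset.sum_add_distrib]
    refine Finset.sum_congr rfl fun β _ => ?_
    rw [hLL β α, ← mul_add]
  have swap3 : ∀ (g : Fin n → Fin n → Fin d → Module.End ℂ V),
      ∑ α, ∑ β, ∑ μ, g α β μ = ∑ μ, ∑ α, ∑ β, g α β μ := by
    intro g
    calc ∑ α, ∑ β, ∑ μ, g α β μ
        = ∑ α, ∑ μ, ∑ β, g α β μ :=
          Finset.sum_congr rfl fun α _ => Finset.sum_comm
      _ = ∑ μ, ∑ α, ∑ β, g α β μ := Finset.sum_comm
  have h3 : D * D + D * D = 0 := by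
    rw [h2]
    have step : ∀ α β, (L α * L β) * (A α * A β + A β * A α)
        = ∑ μ, ((-2 : ℂ) * Γm μ α β) • ((L α * L β) * derx μ) := by
      intro α β
      rw [hAA α β, Finset.mul_sum]
      exact Finset.sum_congr rfl fun μ _ => mul_smul_comm _ _ _
    rw [Finset.sum_congr rfl fun α _ => Finset.sum_congr rfl fun β _ => step α β, swap3]
    refine Finset.sum_eq_zero fun μ _ => ?_
    have : ∑ α, ∑ β, ((-2 : ℂ) * Γm μ α β) • (L α * L β * derx μ)
        = ((-2 : ℂ) • ∑ α, ∑ β, Γm μ α β • (L α * L β)) * derx μ := by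
      rw [Finset.smul_sum, Finset.sum_mul]
      refine Finset.sum_congr rfl fun α _ => ?_
      rw [Finset.smul_sum, Finset.sum_mul]
      refine Finset.sum_congr rfl fun β _ => ?_
      rw [smul_smul, smul_mul_assoc]
    rw [this, hI μ, smul_zero, zero_mul]
  have h4 : D * D = 0 := by
    have h2s : (2 : ℂ) • (D * D) = 0 := by rw [two_smul]; exact h3
    rcases smul_eq_zero.mp h2s with h | h
    · exact absurd h two_ne_zero
    · exact h
  rw [sq]
  exact h4
end

section
/- For six-dimensional N=(1,0) supersymmetry, an odd element Q ∈ S₊ ⊗ U (with dim S₊ = 4, dim U = 2, bracket ∧ ⊗ ω where ∧: Sym²S₊ → Λ²S₊ ≅ V vanishes on symmetric squares and ω is the symplectic form on U) satisfies {Q,Q} = 0 if and only if Q, regarded as a 4×2 matrix, has rank at most one. Equivalently, the defining ideal of the nilpotence variety is generated by the 2×2 minors of the matrix (λ^α_i). -/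
/-- For six-dimensional `𝒩 = (1,0)` supersymmetry, an odd element
`Q = λ^α_i s_α ⊗ u^i ∈ S₊ ⊗ U` (with `dim S₊ = 4`, `dim U = 2`, bracket `∧ ⊗ ω`)
satisfies `{Q, Q} = 0` iff the coefficient matrix `(λ^α_i)` has rank at most one;
the bracket-vanishing equations are exactly the `2 × 2` minors
`λ^α_i λ^β_j − λ^α_j λ^β_i = 0`. -/
theorem nilpotence_variety_6d_N10 (lam : Matrix (Fin 4) (Fin 2) ℂ) :
    (∀ (α β : Fin 4) (i j : Fin 2), lam α i * lam β j - lam α j * lam β i = 0) ↔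
      lam.rank ≤ 1 := by
  constructor
  · intro h
    by_cases hz : lam = 0
    · simp [hz, Matrix.rank_zero]
    · obtain ⟨α₀, i₀, h0⟩ : ∃ α i, lam α i ≠ 0 := by
        by_contra hc
        push_neg at hc
        exact hz (by ext a i; simp [hc])
      have hl : lam = Matrix.vecMulVec (fun α => lam α i₀)
          (fun i => lam α₀ i / lam α₀ i₀) := by
        ext α i
        have := h α α₀ i i₀
        rw [Matrix.vecMulVec_apply, mul_div_assoc', eq_div_iff h0]
        linear_combination this
      rw [hl, Matrix.vecMulVec_eq Unit]
      exact (Matrix.rank_mul_le_left _ _).trans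
        ((Matrix.rank_le_card_width _).trans (by simp))
  · intro h α β i j
    have hr : lam.rank = Module.finrank ℂ (Submodule.span ℂ (Set.range lam.transpose)) :=
      Matrix.rank_eq_finrank_span_cols lam
    rw [hr] at h
    obtain ⟨v, hv⟩ := finrank_le_one_iff.mp h
    have hmem : ∀ k : Fin 2, lam.transpose k ∈ Submodule.span ℂ (Set.range lam.transpose) :=
      fun k => Submodule.subset_span ⟨k, rfl⟩
    obtain ⟨c, hc⟩ := hv ⟨lam.transpose i, hmem i⟩
    obtain ⟨d, hd⟩ := hv ⟨lam.transpose j, hmem j⟩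
    have hci : ∀ α, lam α i = c * (v : Fin 4 → ℂ) α := by
      intro a
      have := congrArg (Subtype.val) hc
      have := congrFun this a
      simpa [Matrix.transpose_apply] using this.symm
    have hdj : ∀ α, lam α j = d * (v : Fin 4 → ℂ) α := by
      intro a
      have := congrArg (Subtype.val) hd
      have := congrFun this a
      simpa [Matrix.transpose_apply] using this.symm
    rw [hci α, hci β, hdj α, hdj β]
    ring
end
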